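/- Uniqueness (abstract timing version, case t_e^v ≤ t_s^u): suppose node v declares itself leader at time t_e^v and subsequently broadcasts its infinite rank every round of length δ_v, and node u becomes a leading participant at time t_s^u ≥ t_e^v. If δ_v ≤ MaxRatio·δ_u and every broadcast message is handled by u within δ_u of its send time, then u receives a message with infinite rank before completing 2·MaxRatio + 2 rounds after t_s^u; i.e., there is a send time s ∈ [t_s^u, t_s^u + δ_v] with handling time at most s + δ_u ≤ t_s^u + (MaxRatio + 1)·δ_u < t_s^u + (2·MaxRatio + 2)·δ_u. -/
import Mathlib


/-- Uniqueness, case t_e^v ≤ t_s^u: v declares itself leader at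
t_e^v and broadcasts its infinite rank at times t_e^v + n·δ_v; u becomes a
leading participant at t_s^u ≥ t_e^v.  If δ_v ≤ MaxRatio·δ_u and every message
is handled within δ_u of its send time, then some broadcast of v occurs at a
time s ∈ [t_s^u, t_s^u + δ_v] and is handled by time
s + δ_u ≤ t_s^u + (MaxRatio + 1)·δ_u < t_s^u + (2·MaxRatio + 2)·δ_u, i.e.
before u completes 2·MaxRatio + 2 rounds after t_s^u. -/
theorem uniqueness_case_a (δu δv MaxRatio tev tsu : ℝ)
    (hu : 0 < δu) (hv : 0 < δv) (hM : 1 ≤ MaxRatio)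
    (hratio : δv ≤ MaxRatio * δu)
    (horder : tev ≤ tsu) :
    ∃ n : ℕ, tsu ≤ tev + (n : ℝ) * δv ∧ tev + (n : ℝ) * δv ≤ tsu + δv ∧
      tev + (n : ℝ) * δv + δu ≤ tsu + (MaxRatio + 1) * δu ∧
      tsu + (MaxRatio + 1) * δu < tsu + (2 * MaxRatio + 2) * δu := by
  refine ⟨⌈(tsu - tev) / δv⌉₊, ?_, ?_, ?_, ?_⟩
  · have h := Nat.le_ceil ((tsu - tev) / δv)
    have : tsu - tev ≤ (⌈(tsu - tev) / δv⌉₊ : ℝ) * δv := by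
      rw [← div_le_iff₀ hv]; exact_mod_cast h
    linarith
  · have h := Nat.ceil_lt_add_one (div_nonneg (by linarith) hv.le : (0:ℝ) ≤ (tsu - tev) / δv)
    have : (⌈(tsu - tev) / δv⌉₊ : ℝ) * δv < (tsu - tev) + δv := by
      have := (mul_lt_mul_of_pos_right h hv)
      calc (⌈(tsu - tev) / δv⌉₊ : ℝ) * δv < ((tsu - tev)/δv + 1) * δv := this
        _ = (tsu - tev) + δv := by field_simp
    linarith
  · have h := Nat.ceil_lt_add_one (div_nonneg (by linarith) hv.le : (0:ℝ) ≤ (tsu - tev) / δv)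
    have h2 : (⌈(tsu - tev) / δv⌉₊ : ℝ) * δv < (tsu - tev) + δv := by
      have := (mul_lt_mul_of_pos_right h hv)
      calc (⌈(tsu - tev) / δv⌉₊ : ℝ) * δv < ((tsu - tev)/δv + 1) * δv := this
        _ = (tsu - tev) + δv := by field_simp
    nlinarith
  · nlinarith
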